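/- Let (Ω,F,P), K, k, β be as in the setup, and define the operator L_S by (L_S f)(x) = (1/2) Σ_{y∈ℤ^d} (k_{x−y} + k_{y−x})(f(y) − f(x)) for bounded f : ℤ^d → ℝ. Suppose G : ℤ^d → [0,∞) is bounded, G(x) → 0 as |x| → ∞, (L_S G)(x) = −δ_{0,x} for all x, and Σ_{x,y∈ℤ^d} G(x−y) β_{x,y} < 2. Then there exists a constant c > 0 such that the function h = 1 + cG satisfies: h(x) > 0 for all x, h(x) → 1 as |x| → ∞, and (L_S h)(x) + (1/2) δ_{0,x} Σ_{y,z∈ℤ^d} h(y−z) β_{y,z} = 0 for all x ∈ ℤ^d. -/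

import Mathlib

open MeasureTheory Filter
open scoped BigOperators

/-!
`L_S` annihilates constants and is linear, so `L_S (1 + c G) = -c δ₀`, and the equation for
`h = 1 + c G` only has content at `x = 0`, where it reads `-c + ½ (A + c B) = 0` with
`A = Σ β = E[(|K| - 1)²]` and `B = Σ G(x - y) β_{x,y} < 2`. Hence `c = A / (2 - B)`, which is
positive because `A > 0` is exactly `P(|K| = 1) < 1`. Since `K` is a.s. supported in a finite
ball, all sums involving `β` are finite.
-/

section Generator

variable {V : Type*} [Sub V]

noncomputable def symmGenerator (k f : V → ℝ) (x : V) : ℝ :=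
  (1 / 2 : ℝ) * ∑' y, (k (x - y) + k (y - x)) * (f y - f x)

lemma symmGenerator_const_add_mul (k f : V → ℝ) (a c : ℝ) (x : V) :
    symmGenerator k (fun y => a + c * f y) x = c * symmGenerator k f x := by
  simp only [symmGenerator]
  rw [mul_left_comm c, ← tsum_mul_left (a := c)]
  exact congrArg _ (tsum_congr fun y => by ring)

end Generator

lemma tsum_one_add_mul_mul {α : Type*} {f w : α → ℝ} (hw : Summable w)
    (hfw : Summable fun q => f q * w q) (c : ℝ) :
    ∑' q, (1 + c * f q) * w q = ∑' q, w q + c * ∑' q, f q * w q := by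
  rw [← tsum_mul_left, ← hw.tsum_add (hfw.mul_left c)]
  exact tsum_congr fun q => by ring

section Bounds

variable {ι Ω : Type*} [MeasurableSpace Ω] {P : Measure Ω} {K : Ω → ι → ℝ}
  {p : ι → Prop} [DecidablePred p] {b : ℝ}

lemma ae_abs_le_of_le_mul_ite
    (h : ∀ᵐ ω ∂P, ∀ x, 0 ≤ K ω x ∧ K ω x ≤ b * if p x then 1 else 0) :
    ∀ᵐ ω ∂P, ∀ x, |K ω x| ≤ |b| := by
  filter_upwards [h] with ω hω x
  obtain ⟨hnonneg, hle⟩ := hω x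
  rw [abs_of_nonneg hnonneg]
  split_ifs at hle
  · linarith [le_abs_self b]
  · linarith [abs_nonneg b]

lemma ae_eq_zero_of_le_mul_ite
    (h : ∀ᵐ ω ∂P, ∀ x, 0 ≤ K ω x ∧ K ω x ≤ b * if p x then 1 else 0) :
    ∀ᵐ ω ∂P, ∀ x, ¬p x → K ω x = 0 := by
  filter_upwards [h] with ω hω x hx
  obtain ⟨hnonneg, hle⟩ := hω x
  rw [if_neg hx, mul_zero] at hle
  exact le_antisymm hle hnonneg

end Bounds

lemma finite_setOf_sum_abs_le (d : ℕ) (r : ℝ) :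
    {x : Fin d → ℤ | ((∑ i, |x i| : ℤ) : ℝ) ≤ r}.Finite := by
  refine (Set.finite_Icc (fun _ => -⌈r⌉) (fun _ => ⌈r⌉)).subset fun x hx => ?_
  have hsum : ∑ i, |x i| ≤ ⌈r⌉ := by
    exact_mod_cast (hx : ((∑ i, |x i| : ℤ) : ℝ) ≤ r).trans (Int.le_ceil r)
  have hx : ∀ i, |x i| ≤ ⌈r⌉ := fun i =>
    (Finset.single_le_sum (fun j _ => abs_nonneg (x j)) (Finset.mem_univ i)).trans hsum
  exact ⟨fun i => neg_le_of_abs_le (hx i), fun i => le_of_abs_le (hx i)⟩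

section SecondMoment

variable {ι Ω : Type*} [Zero ι] [DecidableEq ι] [MeasurableSpace Ω] {P : Measure Ω}
  {K : Ω → ι → ℝ} {S : Finset ι}

noncomputable def secondMoment (P : Measure Ω) (K : Ω → ι → ℝ) (x y : ι) : ℝ :=
  ∫ ω, (K ω x - if x = 0 then 1 else 0) * (K ω y - if y = 0 then 1 else 0) ∂P

lemma secondMoment_eq_zero_of_notMem (h0 : 0 ∈ S) (hsupp : ∀ᵐ ω ∂P, ∀ x ∉ S, K ω x = 0)
    {q : ι × ι} (hq : q ∉ S ×ˢ S) : secondMoment P K q.1 q.2 = 0 := by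
  have hcent : ∀ x ∉ S, ∀ᵐ ω ∂P, (K ω x - if x = 0 then 1 else 0) = 0 := fun x hx =>
    hsupp.mono fun ω hω => by rw [hω x hx, if_neg (ne_of_mem_of_not_mem h0 hx).symm, sub_zero]
  rw [Finset.mem_product, not_and_or] at hq
  refine integral_eq_zero_of_ae ?_
  rcases hq with hq | hq
  · filter_upwards [hcent _ hq] with ω hω
    simp only [hω, zero_mul, Pi.zero_apply]
  · filter_upwards [hcent _ hq] with ω hω
    simp only [hω, mul_zero, Pi.zero_apply]

lemma integrable_secondMoment_integrand [IsFiniteMeasure P]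
    (hmeas : ∀ x, Measurable fun ω => K ω x) {C : ℝ} (hbd : ∀ᵐ ω ∂P, ∀ x, |K ω x| ≤ C) (x y : ι) :
    Integrable (fun ω => (K ω x - if x = 0 then 1 else 0) *
      (K ω y - if y = 0 then 1 else 0)) P := by
  have hcent : ∀ᵐ ω ∂P, ∀ x, |K ω x - if x = 0 then 1 else 0| ≤ C + 1 := by
    filter_upwards [hbd] with ω hω x
    refine (abs_sub _ _).trans (add_le_add (hω x) ?_)
    split_ifs <;> simp
  refine Integrable.of_bound
    (((hmeas x).sub_const _).mul ((hmeas y).sub_const _)).aestronglyMeasurable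
    ((C + 1) * (C + 1)) ?_
  filter_upwards [hcent] with ω hω
  rw [Real.norm_eq_abs, abs_mul]
  exact mul_le_mul (hω x) (hω y) (abs_nonneg _) ((abs_nonneg _).trans (hω x))

lemma ae_sq_tsum_sub_one_eq_sum (h0 : 0 ∈ S) (hsupp : ∀ᵐ ω ∂P, ∀ x ∉ S, K ω x = 0) :
    (fun ω => (∑' x, K ω x - 1) ^ 2) =ᵐ[P] fun ω => ∑ q ∈ S ×ˢ S,
      (K ω q.1 - if q.1 = 0 then 1 else 0) * (K ω q.2 - if q.2 = 0 then 1 else 0) := by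
  filter_upwards [hsupp] with ω hω
  have hsum : ∑' x, K ω x - 1 = ∑ x ∈ S, (K ω x - if x = 0 then 1 else 0) := by
    rw [Finset.sum_sub_distrib, Finset.sum_ite_eq' S 0 fun _ => (1 : ℝ), if_pos h0,
      tsum_eq_sum hω]
  rw [hsum, sq, Finset.sum_mul_sum, Finset.sum_product]

variable [IsFiniteMeasure P]

lemma integrable_sq_tsum_sub_one (hmeas : ∀ x, Measurable fun ω => K ω x) {C : ℝ}
    (hbd : ∀ᵐ ω ∂P, ∀ x, |K ω x| ≤ C) (h0 : 0 ∈ S) (hsupp : ∀ᵐ ω ∂P, ∀ x ∉ S, K ω x = 0) :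
    Integrable (fun ω => (∑' x, K ω x - 1) ^ 2) P :=
  (integrable_finsetSum _ fun q _ => integrable_secondMoment_integrand hmeas hbd q.1 q.2).congr
    (ae_sq_tsum_sub_one_eq_sum h0 hsupp).symm

lemma tsum_secondMoment_eq_integral (hmeas : ∀ x, Measurable fun ω => K ω x) {C : ℝ}
    (hbd : ∀ᵐ ω ∂P, ∀ x, |K ω x| ≤ C) (h0 : 0 ∈ S) (hsupp : ∀ᵐ ω ∂P, ∀ x ∉ S, K ω x = 0) :
    ∑' q : ι × ι, secondMoment P K q.1 q.2 = ∫ ω, (∑' x, K ω x - 1) ^ 2 ∂P := by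
  rw [tsum_eq_sum fun q hq => secondMoment_eq_zero_of_notMem h0 hsupp hq]
  simp only [secondMoment]
  rw [← integral_finsetSum _ fun q _ => integrable_secondMoment_integrand hmeas hbd q.1 q.2]
  exact integral_congr_ae (ae_sq_tsum_sub_one_eq_sum h0 hsupp).symm

lemma tsum_secondMoment_pos [IsProbabilityMeasure P] (hmeas : ∀ x, Measurable fun ω => K ω x)
    {C : ℝ} (hbd : ∀ᵐ ω ∂P, ∀ x, |K ω x| ≤ C) (h0 : 0 ∈ S)
    (hsupp : ∀ᵐ ω ∂P, ∀ x ∉ S, K ω x = 0) (hK1 : P {ω | ∑' x, K ω x = 1} < 1) :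
    0 < ∑' q : ι × ι, secondMoment P K q.1 q.2 := by
  rw [tsum_secondMoment_eq_integral hmeas hbd h0 hsupp]
  refine (integral_nonneg fun ω => sq_nonneg _).lt_of_ne fun h => hK1.ne ?_
  have hzero := (integral_eq_zero_iff_of_nonneg (fun ω => sq_nonneg _)
    (integrable_sq_tsum_sub_one hmeas hbd h0 hsupp)).mp h.symm
  have hone : ∀ᵐ ω ∂P, ∑' x, K ω x = 1 :=
    hzero.mono fun ω hω => by simpa [sub_eq_zero] using hω
  rw [measure_congr (eventuallyEq_univ.mpr hone), measure_univ]

end SecondMoment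

theorem stmt15_general {d : ℕ} {Ω : Type*} [MeasurableSpace Ω] (P : Measure Ω)
    [IsProbabilityMeasure P]
    (K : Ω → (Fin d → ℤ) → ℝ) (b r : ℝ)
    (hKmeas : ∀ x, Measurable fun ω => K ω x)
    (hKbd : ∀ᵐ ω ∂P, ∀ x, 0 ≤ K ω x ∧
      K ω x ≤ b * (if ((∑ i, |x i| : ℤ) : ℝ) ≤ r then 1 else 0))
    (k : (Fin d → ℤ) → ℝ)
    (β : (Fin d → ℤ) → (Fin d → ℤ) → ℝ)
    (hβ : ∀ x y, β x y = ∫ ω, (K ω x - (if x = 0 then 1 else 0)) *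
        (K ω y - (if y = 0 then 1 else 0)) ∂P)
    (hK1 : P {ω | (∑' x, K ω x) = 1} < 1)
    (G : (Fin d → ℤ) → ℝ) (hG0 : ∀ x, 0 ≤ G x)
    (hGlim : Tendsto G cofinite (nhds 0))
    (hGres : ∀ x, (1 / 2 : ℝ) * ∑' y, (k (x - y) + k (y - x)) * (G y - G x) =
      -(if x = 0 then 1 else 0))
    (hGβ : ∑' q : (Fin d → ℤ) × (Fin d → ℤ), G (q.1 - q.2) * β q.1 q.2 < 2) :
    ∃ c > (0 : ℝ),
      (∀ x, 0 < 1 + c * G x) ∧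
      Tendsto (fun x => 1 + c * G x) cofinite (nhds 1) ∧
      ∀ x, (1 / 2 : ℝ) * (∑' y, (k (x - y) + k (y - x)) *
            ((1 + c * G y) - (1 + c * G x))) +
          (1 / 2 : ℝ) * (if x = 0 then 1 else 0) *
            ∑' q : (Fin d → ℤ) × (Fin d → ℤ), (1 + c * G (q.1 - q.2)) * β q.1 q.2 = 0 := by
  obtain ⟨S, h0S, hS⟩ : ∃ S : Finset (Fin d → ℤ), 0 ∈ S ∧ ∀ x ∉ S, ¬((∑ i, |x i| : ℤ) : ℝ) ≤ r :=
    ⟨insert 0 (finite_setOf_sum_abs_le d r).toFinset, Finset.mem_insert_self _ _,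
      fun x hx h => hx (Finset.mem_insert_of_mem ((Set.Finite.mem_toFinset _).2 h))⟩
  have hsupp : ∀ᵐ ω ∂P, ∀ x ∉ S, K ω x = 0 :=
    (ae_eq_zero_of_le_mul_ite hKbd).mono fun ω hω x hx => hω x (hS x hx)
  have hβ_eq : β = secondMoment P K := funext fun x => funext (hβ x)
  have hβfin : ∀ q ∉ S ×ˢ S, β q.1 q.2 = 0 := fun q hq => by
    rw [hβ_eq]; exact secondMoment_eq_zero_of_notMem h0S hsupp hq
  have hA : 0 < ∑' q : (Fin d → ℤ) × (Fin d → ℤ), β q.1 q.2 := by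
    rw [hβ_eq]; exact tsum_secondMoment_pos hKmeas (ae_abs_le_of_le_mul_ite hKbd) h0S hsupp hK1
  set A := ∑' q : (Fin d → ℤ) × (Fin d → ℤ), β q.1 q.2
  set B := ∑' q : (Fin d → ℤ) × (Fin d → ℤ), G (q.1 - q.2) * β q.1 q.2
  have hc : 0 < A / (2 - B) := div_pos hA (sub_pos.2 hGβ)
  refine ⟨A / (2 - B), hc, fun x => add_pos_of_pos_of_nonneg one_pos (mul_nonneg hc.le (hG0 x)),
    by simpa using tendsto_const_nhds.add (hGlim.const_mul (A / (2 - B))), fun x => ?_⟩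
  have hL : symmGenerator k (fun y => 1 + A / (2 - B) * G y) x =
      A / (2 - B) * -(if x = 0 then 1 else 0) := by
    rw [symmGenerator_const_add_mul]; exact congrArg _ (hGres x)
  change symmGenerator k (fun y => 1 + A / (2 - B) * G y) x + _ = 0
  rw [hL, tsum_one_add_mul_mul (summable_of_ne_finset_zero hβfin)
    (summable_of_ne_finset_zero fun q hq => by rw [hβfin q hq, mul_zero])]
  split_ifs
  · field_simp [(sub_pos.2 hGβ).ne']
    ring
  · ring

/-- If `G ≥ 0` is bounded, vanishes at infinity, satisfies `L_S G = −δ₀` and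
`Σ_{x,y} G(x−y) β_{x,y} < 2`, then there is `c > 0` so that `h = 1 + cG` is positive,
tends to `1` at infinity and solves
`(L_S h)(x) + ½ δ_{0,x} Σ_{y,z} h(y−z) β_{y,z} = 0`, where
`(L_S f)(x) = ½ Σ_y (k_{x−y} + k_{y−x})(f(y) − f(x))`. -/
theorem stmt15 {d : ℕ} {Ω : Type*} [MeasurableSpace Ω] (P : Measure Ω)
    [IsProbabilityMeasure P]
    (K : Ω → (Fin d → ℤ) → ℝ) (b r : ℝ)
    (hKmeas : ∀ x, Measurable fun ω => K ω x)
    (hKbd : ∀ᵐ ω ∂P, ∀ x, 0 ≤ K ω x ∧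
      K ω x ≤ b * (if ((∑ i, |x i| : ℤ) : ℝ) ≤ r then 1 else 0))
    (k : (Fin d → ℤ) → ℝ) (hk : ∀ x, k x = ∫ ω, K ω x ∂P)
    (β : (Fin d → ℤ) → (Fin d → ℤ) → ℝ)
    (hβ : ∀ x y, β x y = ∫ ω, (K ω x - (if x = 0 then 1 else 0)) *
        (K ω y - (if y = 0 then 1 else 0)) ∂P)
    (hbasis : ∃ v : Fin d → (Fin d → ℤ), (∀ i, k (v i) ≠ 0) ∧
      LinearIndependent ℝ fun i => fun j => ((v i j : ℝ)))
    (hK1 : P {ω | (∑' x, K ω x) = 1} < 1)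
    (G : (Fin d → ℤ) → ℝ) (hG0 : ∀ x, 0 ≤ G x)
    (hGbd : ∃ M : ℝ, ∀ x, G x ≤ M)
    (hGlim : Tendsto G cofinite (nhds 0))
    (hGres : ∀ x, (1 / 2 : ℝ) * ∑' y, (k (x - y) + k (y - x)) * (G y - G x) =
      -(if x = 0 then 1 else 0))
    (hGβ : ∑' q : (Fin d → ℤ) × (Fin d → ℤ), G (q.1 - q.2) * β q.1 q.2 < 2) :
    ∃ c > (0 : ℝ),
      (∀ x, 0 < 1 + c * G x) ∧
      Tendsto (fun x => 1 + c * G x) cofinite (nhds 1) ∧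
      ∀ x, (1 / 2 : ℝ) * (∑' y, (k (x - y) + k (y - x)) *
            ((1 + c * G y) - (1 + c * G x))) +
          (1 / 2 : ℝ) * (if x = 0 then 1 else 0) *
            ∑' q : (Fin d → ℤ) × (Fin d → ℤ), (1 + c * G (q.1 - q.2)) * β q.1 q.2 = 0 :=
  stmt15_general P K b r hKmeas hKbd k β hβ hK1 G hG0 hGlim hGres hGβ
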